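/- Let φ ∈ G₂^dec and 1 ≤ q ≤ p < ∞ with r^{−n/p} ≲ φ(r) for all r>0. Suppose a diffeomorphism ψ:ℝⁿ→ℝⁿ induces a bounded composition operator C_ψ on the generalized Morrey space M_q^φ(ℝⁿ). Then there exists C>0, independent of x₀ and f, such that ‖f(Dψ(x₀)·)‖_{M_q^φ} ≤ C‖f‖_{M_q^φ} for every x₀ ∈ ℝⁿ and every f ∈ M_q^φ(ℝⁿ). -/

import Mathlib

open MeasureTheory Filter Set
open scoped ENNReal NNReal

noncomputable section

/-- A Young function: convex on `[0,∞)`, vanishing at `0`, nonnegative, tending to `∞`. -/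
def IsYoung (Φ : ℝ → ℝ) : Prop :=
  ConvexOn ℝ (Set.Ici 0) Φ ∧ Φ 0 = 0 ∧ (∀ t, 0 ≤ t → 0 ≤ Φ t) ∧
    Filter.Tendsto Φ Filter.atTop Filter.atTop

/-- Almost decreasing on `(0,∞)`: `g s ≤ C * g r` whenever `0 < r < s`. -/
def AlmostDecreasingOn (g : ℝ → ℝ) : Prop :=
  ∃ C > 0, ∀ r s : ℝ, 0 < r → r < s → g s ≤ C * g r

/-- Almost increasing on `(0,∞)`: `g r ≤ C * g s` whenever `0 < r < s`. -/
def AlmostIncreasingOn (g : ℝ → ℝ) : Prop :=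
  ∃ C > 0, ∀ r s : ℝ, 0 < r → r < s → g r ≤ C * g s

/-- The class `G₁^dec`: positive, almost decreasing and submultiplicative on `(0,∞)`. -/
def G1dec (φ : ℝ → ℝ) : Prop :=
  (∀ r : ℝ, 0 < r → 0 < φ r) ∧ AlmostDecreasingOn φ ∧
    ∃ C > 0, ∀ r s : ℝ, 0 < r → 0 < s → φ (r * s) ≤ C * φ r * φ s

/-- The class `G₂^dec`: `φ ∈ G₀ ∩ G₁^dec` and `φ(1/r) ≤ C/φ(r)`. -/
def G2dec (φ : ℝ → ℝ) : Prop :=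
  G1dec φ ∧ Filter.Tendsto φ (nhdsWithin 0 (Set.Ioi 0)) Filter.atTop ∧
    Filter.Tendsto φ Filter.atTop (nhds 0) ∧
    ∃ C > 0, ∀ r : ℝ, 0 < r → φ r⁻¹ ≤ C / φ r

/-- Generalized inverse of a Young function: `Φ⁻¹(u) = inf {t ≥ 0 : Φ(t) > u}`. -/
def yInv (Φ : ℝ → ℝ) (u : ℝ) : ℝ := sInf {t : ℝ | 0 ≤ t ∧ u < Φ t}

/-- The generalized Morrey norm
`‖f‖_{M_q^φ} = sup_{a, r>0} (1/φ(r)) ((1/|B(a,r)|) ∫_{B(a,r)} |f|^q)^{1/q}`. -/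
def gMorreyNorm {n : ℕ} (q : ℝ) (φ : ℝ → ℝ) (f : EuclideanSpace ℝ (Fin n) → ℝ) : ℝ≥0∞ :=
  ⨆ (a : EuclideanSpace ℝ (Fin n)) (r : ℝ) (_ : 0 < r),
    (ENNReal.ofReal (φ r))⁻¹ *
      ((∫⁻ x in Metric.ball a r, ENNReal.ofReal (|f x| ^ q)) /
          volume (Metric.ball a r)) ^ (1 / q)

end

/-!
Blow-up at `x₀`: for `c > 0` the map `h ↦ h ∘ (x ↦ c • (ψ (x₀ + c⁻¹ • x) - ψ x₀))` is `C_ψ`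
conjugated by two dilations, and a dilation by `t` costs at most `φ(t)` in the Morrey norm by
submultiplicativity. Since `φ(c) φ(c⁻¹) ≲ 1`, these maps are bounded uniformly in `c`, and as
`c → ∞` they converge pointwise to `Dψ(x₀)`; Fatou's lemma carries the bound over to `h ∘ Dψ(x₀)`
whenever `h` is lower semicontinuous.

For `f` itself, work with the density `|f|^q`. On each ball it may be replaced by a measurable
minorant, then by bounded integrable truncations (monotone convergence), and these are
approximated from above by lower semicontinuous functions with integral error `e`
(Vitali–Carathéodory). On a ball of measure `V` the error raises the average by at most
`min(k, e/V)` for a bound `k`, and `φ(r)⁻¹ ≲ V^{1/p}` together with `q ≤ p` makes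
`φ(r)⁻¹ min(k, e/V)^{1/q} ≲ k^{1/q - 1/p} e^{1/p}` uniformly over small and large balls.
-/

open Metric MeasureTheory Filter Module Topology
open scoped ENNReal

namespace Morrey

theorem min_le_rpow_mul_rpow (a b : ℝ≥0∞) {θ : ℝ} (h₀ : 0 ≤ θ) (h₁ : θ ≤ 1) :
    min a b ≤ a ^ (1 - θ) * b ^ θ :=
  calc min a b = min a b ^ (1 - θ) * min a b ^ θ := by
        rw [← ENNReal.rpow_add_of_nonneg _ _ (by linarith) h₀, sub_add_cancel, ENNReal.rpow_one]
    _ ≤ a ^ (1 - θ) * b ^ θ := by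
        gcongr
        · exact min_le_left a b
        · exact min_le_right a b

theorem rpow_mul_min_div_rpow_le {p q : ℝ} (hq : 0 < q) (hqp : q ≤ p) (k e : ℝ≥0∞) {V : ℝ≥0∞}
    (hV₀ : V ≠ 0) (hV : V ≠ ⊤) :
    V ^ (1 / p) * min k (e / V) ^ (1 / q) ≤ k ^ (1 / q - 1 / p) * e ^ (1 / p) := by
  have hp : 0 < p := hq.trans_le hqp
  have hθ : q / p ≤ 1 := (div_le_one hp).2 hqp
  calc V ^ (1 / p) * min k (e / V) ^ (1 / q)
      ≤ V ^ (1 / p) * (k ^ (1 - q / p) * (e / V) ^ (q / p)) ^ (1 / q) := by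
        gcongr
        exact min_le_rpow_mul_rpow k _ (by positivity) hθ
    _ = k ^ (1 / q - 1 / p) * (V * (e / V)) ^ (1 / p) := by
        rw [ENNReal.mul_rpow_of_nonneg _ _ (by positivity), ← ENNReal.rpow_mul, ← ENNReal.rpow_mul,
          ENNReal.mul_rpow_of_nonneg _ _ (by positivity)]
        have h₁ : (1 - q / p) * (1 / q) = 1 / q - 1 / p := by field_simp
        have h₂ : q / p * (1 / q) = 1 / p := by field_simp
        rw [h₁, h₂]
        ring
    _ = k ^ (1 / q - 1 / p) * e ^ (1 / p) := by rw [ENNReal.mul_div_cancel hV₀ hV]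

theorem le_mul_of_forall_le_mul_add {a b C : ℝ≥0∞} (hC : C ≠ ⊤)
    (h : ∀ ε ≠ 0, a ≤ C * (b + ε)) : a ≤ C * b := by
  refine ENNReal.le_of_forall_pos_le_add fun δ hδ _ => ?_
  rcases eq_or_ne C 0 with rfl | hC₀
  · simp [show a = 0 by simpa using h 1 one_ne_zero]
  · calc a ≤ C * (b + δ / C) := h _ (by simp [hC, hδ.ne'])
      _ = C * b + δ := by rw [mul_add, ENNReal.mul_div_cancel hC₀ hC]

theorem setLIntegral_le_add_of_lintegral_le_add {α : Type*} [MeasurableSpace α] {μ : Measure α}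
    {u G : α → ℝ≥0∞} (huG : u ≤ G) (hu : ∫⁻ x, u x ∂μ ≠ ⊤) {e : ℝ≥0∞}
    (hG : ∫⁻ x, G x ∂μ ≤ ∫⁻ x, u x ∂μ + e) {s : Set α} (hs : MeasurableSet s) :
    ∫⁻ x in s, G x ∂μ ≤ ∫⁻ x in s, u x ∂μ + e := by
  have hc : ∫⁻ x in sᶜ, u x ∂μ ≠ ⊤ := ne_top_of_le_ne_top hu (setLIntegral_le_lintegral _ _)
  refine (ENNReal.add_le_add_iff_right hc).1 ?_
  calc ∫⁻ x in s, G x ∂μ + ∫⁻ x in sᶜ, u x ∂μ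
      ≤ ∫⁻ x in s, G x ∂μ + ∫⁻ x in sᶜ, G x ∂μ := by gcongr; exact huG _
    _ = ∫⁻ x, G x ∂μ := lintegral_add_compl G hs
    _ ≤ ∫⁻ x, u x ∂μ + e := hG
    _ = ∫⁻ x in s, u x ∂μ + e + ∫⁻ x in sᶜ, u x ∂μ := by
        rw [← lintegral_add_compl u hs]; ring

section MetricSpace

variable {X : Type*} [PseudoMetricSpace X] [MeasurableSpace X]

noncomputable def morreyTerm (μ : Measure X) (q : ℝ) (φ : ℝ → ℝ) (g : X → ℝ≥0∞) (a : X)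
    (r : ℝ) : ℝ≥0∞ :=
  (ENNReal.ofReal (φ r))⁻¹ * (⨍⁻ x in ball a r, g x ∂μ) ^ (1 / q)

/-- The Morrey norm written in terms of the density `g = |f|^q`; unlike `f`, the density can be
truncated and approximated from above by lower semicontinuous functions. -/
noncomputable def lMorreyNorm (μ : Measure X) (q : ℝ) (φ : ℝ → ℝ) (g : X → ℝ≥0∞) : ℝ≥0∞ :=
  ⨆ (a : X) (r : ℝ) (_ : 0 < r), morreyTerm μ q φ g a r

theorem gMorreyNorm_eq_lMorreyNorm {n : ℕ} (q : ℝ) (φ : ℝ → ℝ)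
    (f : EuclideanSpace ℝ (Fin n) → ℝ) :
    gMorreyNorm q φ f = lMorreyNorm volume q φ (fun x => ENNReal.ofReal (|f x| ^ q)) := by
  simp only [gMorreyNorm, lMorreyNorm, morreyTerm, setLAverage_eq]

variable {μ : Measure X} {q : ℝ} {φ : ℝ → ℝ}

theorem morreyTerm_le_lMorreyNorm (g : X → ℝ≥0∞) (a : X) {r : ℝ} (hr : 0 < r) :
    morreyTerm μ q φ g a r ≤ lMorreyNorm μ q φ g :=
  le_iSup₂_of_le a r (le_iSup_of_le hr le_rfl)

theorem lMorreyNorm_mono (hq : 0 ≤ q) {g h : X → ℝ≥0∞} (hgh : g ≤ h) :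
    lMorreyNorm μ q φ g ≤ lMorreyNorm μ q φ h := by
  refine iSup₂_mono fun a r => iSup_mono fun _ => ?_
  unfold morreyTerm
  gcongr
  exact Eventually.of_forall hgh

theorem lMorreyNorm_comp_le (hq : 0 ≤ q) {A : X → X} (hA : MeasurableEmbedding A) {C : ℝ≥0∞}
    (hmeas : ∀ g : X → ℝ≥0∞, Measurable g →
      lMorreyNorm μ q φ (g ∘ A) ≤ C * lMorreyNorm μ q φ g) (g : X → ℝ≥0∞) :
    lMorreyNorm μ q φ (g ∘ A) ≤ C * lMorreyNorm μ q φ g := by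
  refine iSup₂_le fun a r => iSup_le fun hr => ?_
  -- `g` need not be measurable: on this ball, trade it for a measurable minorant with the same
  -- integral against the image measure
  obtain ⟨m, hm, hmg, hint⟩ := exists_measurable_le_lintegral_eq ((μ.restrict (ball a r)).map A) g
  have hterm : morreyTerm μ q φ (g ∘ A) a r = morreyTerm μ q φ (m ∘ A) a r := by
    simp only [morreyTerm, setLAverage_eq, Function.comp_apply, ← hA.lintegral_map, hint]
  calc morreyTerm μ q φ (g ∘ A) a r = morreyTerm μ q φ (m ∘ A) a r := hterm
    _ ≤ lMorreyNorm μ q φ (m ∘ A) := morreyTerm_le_lMorreyNorm _ a hr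
    _ ≤ C * lMorreyNorm μ q φ m := hmeas m hm
    _ ≤ C * lMorreyNorm μ q φ g := by gcongr; exact lMorreyNorm_mono hq hmg

variable [ProperSpace X] [IsFiniteMeasureOnCompacts μ] [μ.IsOpenPosMeasure]

theorem morreyTerm_le_iff (hq : 0 < q) {r : ℝ} (hφ : 0 < φ r) (hr : 0 < r) (g : X → ℝ≥0∞)
    (a : X) (M : ℝ≥0∞) :
    morreyTerm μ q φ g a r ≤ M ↔
      ∫⁻ x in ball a r, g x ∂μ ≤ μ (ball a r) * (ENNReal.ofReal (φ r) * M) ^ q := by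
  rw [morreyTerm, setLAverage_eq,
    ENNReal.inv_mul_le_iff (ENNReal.ofReal_pos.2 hφ).ne' ENNReal.ofReal_ne_top, one_div,
    ENNReal.rpow_inv_le_iff hq,
    ENNReal.div_le_iff (measure_ball_pos μ a hr).ne' measure_ball_lt_top.ne, mul_comm]

theorem lMorreyNorm_le_of_le_liminf (hq : 0 < q) (hφ : ∀ r, 0 < r → 0 < φ r)
    {f : X → ℝ≥0∞} {g : ℕ → X → ℝ≥0∞} (hg : ∀ k, Measurable (g k))
    (hfg : ∀ x, f x ≤ liminf (fun k => g k x) atTop) {M : ℝ≥0∞}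
    (hM : ∀ k, lMorreyNorm μ q φ (g k) ≤ M) :
    lMorreyNorm μ q φ f ≤ M := by
  refine iSup₂_le fun a r => iSup_le fun hr => ?_
  have hgk : ∀ k, ∫⁻ x in ball a r, g k x ∂μ ≤ μ (ball a r) * (ENNReal.ofReal (φ r) * M) ^ q :=
    fun k => (morreyTerm_le_iff hq (hφ r hr) hr _ a M).1
      ((morreyTerm_le_lMorreyNorm _ a hr).trans (hM k))
  rw [morreyTerm_le_iff hq (hφ r hr) hr]
  calc ∫⁻ x in ball a r, f x ∂μ ≤ ∫⁻ x in ball a r, liminf (fun k => g k x) atTop ∂μ :=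
        lintegral_mono hfg
    _ ≤ liminf (fun k => ∫⁻ x in ball a r, g k x ∂μ) atTop := lintegral_liminf_le hg
    _ ≤ μ (ball a r) * (ENNReal.ofReal (φ r) * M) ^ q :=
        liminf_le_of_frequently_le' (Frequently.of_forall hgk)

theorem lMorreyNorm_comp_le_of_measurable (hq : 0 < q) (hφ : ∀ r, 0 < r → 0 < φ r) {A : X → X}
    (hAm : Measurable A) {C : ℝ≥0∞}
    (hbdd : ∀ u : X → ℝ≥0∞, Measurable u → ∀ k ≠ ⊤, (∀ x, u x ≤ k) → ∫⁻ x, u x ∂μ ≠ ⊤ →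
      lMorreyNorm μ q φ (u ∘ A) ≤ C * lMorreyNorm μ q φ u)
    {g : X → ℝ≥0∞} (hg : Measurable g) :
    lMorreyNorm μ q φ (g ∘ A) ≤ C * lMorreyNorm μ q φ g := by
  set u : ℕ → X → ℝ≥0∞ := fun k => (spanningSets μ k).indicator fun x => min (g x) k
  have hu : ∀ k, Measurable (u k) := fun k =>
    (hg.min measurable_const).indicator (measurableSet_spanningSets μ k)
  have hug : ∀ k, u k ≤ g := fun k => Set.indicator_le fun x _ => min_le_left _ _
  have hint : ∀ k, ∫⁻ x, u k x ∂μ ≠ ⊤ := fun k => by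
    refine ne_top_of_le_ne_top (ENNReal.mul_ne_top (ENNReal.natCast_ne_top k)
      (measure_spanningSets_lt_top μ k).ne) ?_
    rw [lintegral_indicator (measurableSet_spanningSets μ k), ← setLIntegral_const]
    exact lintegral_mono fun x => min_le_right _ _
  have hlim : ∀ y, Tendsto (fun k => u k y) atTop (𝓝 (g y)) := fun y => by
    refine Tendsto.congr' ((eventually_mem_spanningSets μ y).mono fun k hk =>
      (Set.indicator_of_mem hk _).symm) ?_
    simpa using tendsto_const_nhds.min ENNReal.tendsto_nat_nhds_top
  refine lMorreyNorm_le_of_le_liminf hq hφ (g := fun k => u k ∘ A) (fun k => (hu k).comp hAm)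
    (fun x => (hlim (A x)).liminf_eq.ge) fun k => ?_
  calc lMorreyNorm μ q φ (u k ∘ A) ≤ C * lMorreyNorm μ q φ (u k) :=
        hbdd (u k) (hu k) k (ENNReal.natCast_ne_top k)
          (fun x => Set.indicator_le (fun y _ => min_le_right _ _) x) (hint k)
    _ ≤ C * lMorreyNorm μ q φ g := by gcongr; exact lMorreyNorm_mono hq.le (hug k)

theorem morreyTerm_le_morreyTerm_add {p : ℝ} (hq : 1 ≤ q) (hqp : q ≤ p) {a : X} {r : ℝ} (hr : 0 < r)
    {c : ℝ≥0∞} (hlow : (ENNReal.ofReal (φ r))⁻¹ ≤ c * μ (ball a r) ^ (1 / p))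
    {h u : X → ℝ≥0∞} {k e : ℝ≥0∞} (hk : ∀ x, h x ≤ k)
    (hhu : ∫⁻ x in ball a r, h x ∂μ ≤ ∫⁻ x in ball a r, u x ∂μ + e) :
    morreyTerm μ q φ h a r ≤ morreyTerm μ q φ u a r + c * (k ^ (1 / q - 1 / p) * e ^ (1 / p)) := by
  have hq₀ : 0 < q := one_pos.trans_le hq
  set V := μ (ball a r)
  have hV₀ : V ≠ 0 := (measure_ball_pos μ a hr).ne'
  have hV : V ≠ ⊤ := measure_ball_lt_top.ne
  have havg : ⨍⁻ x in ball a r, h x ∂μ ≤ ⨍⁻ x in ball a r, u x ∂μ + min k (e / V) := by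
    rw [setLAverage_eq, setLAverage_eq]
    have hk' : (∫⁻ x in ball a r, h x ∂μ) / V ≤ k := by
      rw [ENNReal.div_le_iff hV₀ hV, ← setLIntegral_const]
      exact lintegral_mono hk
    have he : (∫⁻ x in ball a r, h x ∂μ) / V ≤ (∫⁻ x in ball a r, u x ∂μ) / V + e / V := by
      rw [← ENNReal.add_div]
      gcongr
    refine (le_min hk' he).trans ?_
    rcases le_total k (e / V) with hke | hke
    · rw [min_eq_left hke]
      exact (min_le_left _ _).trans le_add_self
    · rw [min_eq_right hke]
      exact min_le_right _ _
  calc morreyTerm μ q φ h a r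
      ≤ (ENNReal.ofReal (φ r))⁻¹ *
          ((⨍⁻ x in ball a r, u x ∂μ) ^ (1 / q) + min k (e / V) ^ (1 / q)) := by
        rw [morreyTerm]
        gcongr
        exact (ENNReal.rpow_le_rpow havg (by positivity)).trans
          (ENNReal.rpow_add_le_add_rpow _ _ (by positivity) ((div_le_one hq₀).2 hq))
    _ ≤ morreyTerm μ q φ u a r + c * V ^ (1 / p) * min k (e / V) ^ (1 / q) := by
        rw [mul_add, morreyTerm]
        gcongr
    _ ≤ morreyTerm μ q φ u a r + c * (k ^ (1 / q - 1 / p) * e ^ (1 / p)) := by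
        rw [mul_assoc]
        gcongr _ + c * ?_
        exact rpow_mul_min_div_rpow_le hq₀ hqp k e hV₀ hV

variable [BorelSpace X] [μ.WeaklyRegular]

theorem exists_lowerSemicontinuous_ge_lMorreyNorm_le {p : ℝ} (hq : 1 ≤ q) (hqp : q ≤ p)
    {c : ℝ≥0∞} (hc : c ≠ ⊤)
    (hlow : ∀ a r, 0 < r → (ENNReal.ofReal (φ r))⁻¹ ≤ c * μ (ball a r) ^ (1 / p))
    {u : X → ℝ≥0∞} (hu : Measurable u) {k : ℝ≥0∞} (hk : k ≠ ⊤) (huk : ∀ x, u x ≤ k)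
    (hint : ∫⁻ x, u x ∂μ ≠ ⊤) {ε : ℝ≥0∞} (hε : ε ≠ 0) :
    ∃ h : X → ℝ≥0∞, u ≤ h ∧ LowerSemicontinuous h ∧ (∀ x, h x ≠ ⊤) ∧
      lMorreyNorm μ q φ h ≤ lMorreyNorm μ q φ u + ε := by
  have hp : 0 < p := one_pos.trans_le (hq.trans hqp)
  obtain ⟨e, he₀, he⟩ : ∃ e : ℝ≥0∞, e ≠ 0 ∧ c * (k ^ (1 / q - 1 / p) * e ^ (1 / p)) ≤ ε := by
    have hexp : 0 ≤ 1 / q - 1 / p := sub_nonneg.2 (one_div_le_one_div_of_le (by linarith) hqp)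
    have hlim : Tendsto (fun e : ℝ≥0∞ => c * (k ^ (1 / q - 1 / p) * e ^ (1 / p))) (𝓝 0) (𝓝 0) := by
      convert ENNReal.Tendsto.const_mul (ENNReal.Tendsto.const_mul
          ((ENNReal.continuous_rpow_const (y := 1 / p)).tendsto 0)
          (Or.inr (ENNReal.rpow_ne_top_of_nonneg hexp hk)))
          (Or.inr hc) using 2
      rw [ENNReal.zero_rpow_of_pos (by positivity), mul_zero, mul_zero]
    obtain ⟨i, hi, hi'⟩ := ENNReal.nhds_zero_basis.eventually_iff.1
      (hlim.eventually (eventually_le_nhds (pos_iff_ne_zero.2 hε)))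
    obtain ⟨e, he₀, hei⟩ := exists_between hi
    exact ⟨e, he₀.ne', hi' hei⟩
  obtain ⟨G, huG, hG, hGint⟩ := exists_le_lowerSemicontinuous_lintegral_ge μ u hu he₀
  refine ⟨fun x => min (G x) k, fun x => le_min (huG x) (huk x),
    hG.inf lowerSemicontinuous_const, fun x => ne_top_of_le_ne_top hk (min_le_right _ _),
    iSup₂_le fun a r => iSup_le fun hr => ?_⟩
  calc morreyTerm μ q φ (fun x => min (G x) k) a r
      ≤ morreyTerm μ q φ u a r + c * (k ^ (1 / q - 1 / p) * e ^ (1 / p)) :=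
        morreyTerm_le_morreyTerm_add hq hqp hr (hlow a r hr) (fun x => min_le_right _ _)
          ((lintegral_mono fun x => min_le_left _ _).trans
            (setLIntegral_le_add_of_lintegral_le_add huG hint hGint measurableSet_ball))
    _ ≤ lMorreyNorm μ q φ u + ε := add_le_add (morreyTerm_le_lMorreyNorm u a hr) he

theorem lMorreyNorm_comp_le_of_bounded {p : ℝ} (hq : 1 ≤ q) (hqp : q ≤ p)
    {c : ℝ≥0∞} (hc : c ≠ ⊤)
    (hlow : ∀ a r, 0 < r → (ENNReal.ofReal (φ r))⁻¹ ≤ c * μ (ball a r) ^ (1 / p))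
    {A : X → X} {C : ℝ≥0∞} (hC : C ≠ ⊤)
    (hlsc : ∀ h : X → ℝ≥0∞, LowerSemicontinuous h → (∀ x, h x ≠ ⊤) →
      lMorreyNorm μ q φ (h ∘ A) ≤ C * lMorreyNorm μ q φ h)
    {u : X → ℝ≥0∞} (hu : Measurable u) {k : ℝ≥0∞} (hk : k ≠ ⊤) (huk : ∀ x, u x ≤ k)
    (hint : ∫⁻ x, u x ∂μ ≠ ⊤) :
    lMorreyNorm μ q φ (u ∘ A) ≤ C * lMorreyNorm μ q φ u :=
  le_mul_of_forall_le_mul_add hC fun ε hε => by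
    obtain ⟨h, huh, hh, hfin, hhu⟩ :=
      exists_lowerSemicontinuous_ge_lMorreyNorm_le hq hqp hc hlow hu hk huk hint hε
    calc lMorreyNorm μ q φ (u ∘ A) ≤ lMorreyNorm μ q φ (h ∘ A) :=
          lMorreyNorm_mono (by linarith) fun x => huh (A x)
      _ ≤ C * lMorreyNorm μ q φ h := hlsc h hh hfin
      _ ≤ C * (lMorreyNorm μ q φ u + ε) := by gcongr

theorem lMorreyNorm_comp_le_of_forall_lowerSemicontinuous {p : ℝ} (hq : 1 ≤ q) (hqp : q ≤ p)
    (hφ : ∀ r, 0 < r → 0 < φ r) {c : ℝ≥0∞} (hc : c ≠ ⊤)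
    (hlow : ∀ a r, 0 < r → (ENNReal.ofReal (φ r))⁻¹ ≤ c * μ (ball a r) ^ (1 / p))
    {A : X → X} (hA : MeasurableEmbedding A) {C : ℝ≥0∞} (hC : C ≠ ⊤)
    (hlsc : ∀ h : X → ℝ≥0∞, LowerSemicontinuous h → (∀ x, h x ≠ ⊤) →
      lMorreyNorm μ q φ (h ∘ A) ≤ C * lMorreyNorm μ q φ h)
    (g : X → ℝ≥0∞) :
    lMorreyNorm μ q φ (g ∘ A) ≤ C * lMorreyNorm μ q φ g :=
  lMorreyNorm_comp_le (by linarith) hA (fun _ hg =>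
    lMorreyNorm_comp_le_of_measurable (by linarith) hφ hA.measurable
      (fun _ hu _ hk huk hint =>
        lMorreyNorm_comp_le_of_bounded hq hqp hc hlow hC hlsc hu hk huk hint)
      hg) g

end MetricSpace


section NormedSpace

variable {E : Type*} [NormedAddCommGroup E] [NormedSpace ℝ E]

theorem preimage_add_smul_ball (c a : E) {t : ℝ} (ht : 0 < t) (r : ℝ) :
    (fun x => c + t • x) ⁻¹' ball (c + t • a) (t * r) = ball a r := by
  ext x
  simp only [Set.mem_preimage, mem_ball, dist_add_left, dist_smul₀, Real.norm_eq_abs,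
    abs_of_pos ht, mul_lt_mul_iff_right₀ ht]

noncomputable def blowUp {F : Type*} [NormedAddCommGroup F] [NormedSpace ℝ F] (ψ : E → F)
    (x₀ : E) (c : ℝ) (x : E) : F :=
  c • (ψ (x₀ + c⁻¹ • x) - ψ x₀)

theorem tendsto_blowUp {F : Type*} [NormedAddCommGroup F] [NormedSpace ℝ F] {ψ : E → F}
    {x₀ : E} (hdiff : DifferentiableAt ℝ ψ x₀) (x : E) :
    Tendsto (fun k : ℕ => blowUp ψ x₀ (k + 1) x) atTop (𝓝 (fderiv ℝ ψ x₀ x)) := by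
  refine hdiff.hasFDerivAt.lim x ?_
  simp only [Real.norm_eq_abs]
  exact tendsto_abs_atTop_atTop.comp (tendsto_atTop_add_const_right _ 1 tendsto_natCast_atTop_atTop)

theorem fderiv_comp_fderiv_of_leftInverse {F : Type*} [NormedAddCommGroup F] [NormedSpace ℝ F]
    {f : E → F} {g : F → E} (hgf : Function.LeftInverse g f) {x : E}
    (hf : DifferentiableAt ℝ f x) (hg : DifferentiableAt ℝ g (f x)) :
    (fderiv ℝ g (f x)).comp (fderiv ℝ f x) = ContinuousLinearMap.id ℝ E := by
  rw [← fderiv_comp x hg hf, hgf.comp_eq_id, fderiv_id]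

theorem measurableEmbedding_fderiv_of_inverse {F : Type*} [NormedAddCommGroup F]
    [NormedSpace ℝ F] [MeasurableSpace E] [BorelSpace E] [MeasurableSpace F] [BorelSpace F]
    {f : E → F} {g : F → E} (hgf : Function.LeftInverse g f) (hfg : Function.RightInverse g f)
    {x : E} (hf : DifferentiableAt ℝ f x) (hg : DifferentiableAt ℝ g (f x)) :
    MeasurableEmbedding (fderiv ℝ f x) := by
  have hf' : DifferentiableAt ℝ f (g (f x)) := by rwa [hgf x]
  have hfg' := fderiv_comp_fderiv_of_leftInverse hfg hg hf'
  rw [hgf x] at hfg'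
  exact (ContinuousLinearEquiv.equivOfInverse (fderiv ℝ f x) (fderiv ℝ g (f x))
    (fun v => congr($(fderiv_comp_fderiv_of_leftInverse hgf hf hg) v))
    (fun w => congr($hfg' w))).toHomeomorph.measurableEmbedding

end NormedSpace

section Haar

variable {E : Type*} [NormedAddCommGroup E] [NormedSpace ℝ E] [FiniteDimensional ℝ E]
  [MeasurableSpace E] [BorelSpace E] {μ : Measure E} [μ.IsAddHaarMeasure]

theorem map_add_smul_eq (c : E) {t : ℝ} (ht : 0 < t) :
    μ.map (fun x => c + t • x) = ENNReal.ofReal ((t ^ finrank ℝ E)⁻¹) • μ := by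
  rw [show (fun x : E => c + t • x) = (c + ·) ∘ (t • ·) from rfl,
    ← Measure.map_map (measurable_const_add c) (measurable_const_smul t),
    Measure.map_addHaar_smul μ ht.ne', Measure.map_smul, map_add_left_eq_self,
    abs_of_pos (by positivity)]

theorem setLIntegral_ball_comp_add_smul (G : E → ℝ≥0∞) (c a : E) {t : ℝ} (ht : 0 < t)
    (r : ℝ) :
    ∫⁻ x in ball a r, G (c + t • x) ∂μ =
      ENNReal.ofReal ((t ^ finrank ℝ E)⁻¹) * ∫⁻ y in ball (c + t • a) (t * r), G y ∂μ := by
  have hT : MeasurableEmbedding (fun x : E => c + t • x) :=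
    ((Homeomorph.smulOfNeZero t ht.ne').trans (Homeomorph.addLeft c)).measurableEmbedding
  rw [← preimage_add_smul_ball c a ht r, ← hT.lintegral_map, ← hT.restrict_map,
    map_add_smul_eq c ht, Measure.restrict_smul, lintegral_smul_measure, smul_eq_mul]

theorem setLAverage_ball_comp_add_smul (G : E → ℝ≥0∞) (c a : E) {t : ℝ} (ht : 0 < t)
    (r : ℝ) :
    ⨍⁻ x in ball a r, G (c + t • x) ∂μ = ⨍⁻ y in ball (c + t • a) (t * r), G y ∂μ := by
  have hvol : μ (ball a r) =
      ENNReal.ofReal ((t ^ finrank ℝ E)⁻¹) * μ (ball (c + t • a) (t * r)) := by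
    simpa using setLIntegral_ball_comp_add_smul (μ := μ) (fun _ => 1) c a ht r
  rw [setLAverage_eq, setLAverage_eq, setLIntegral_ball_comp_add_smul G c a ht r, hvol,
    ENNReal.mul_div_mul_left _ _ (by positivity) ENNReal.ofReal_ne_top]

variable {q : ℝ} {φ : ℝ → ℝ}

theorem lMorreyNorm_comp_add_smul_le (hφ : ∀ r, 0 < r → 0 < φ r) {Cs : ℝ} (hCs : 0 ≤ Cs)
    (hsub : ∀ r s, 0 < r → 0 < s → φ (r * s) ≤ Cs * φ r * φ s) (g : E → ℝ≥0∞) (c : E)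
    {t : ℝ} (ht : 0 < t) :
    lMorreyNorm μ q φ (fun x => g (c + t • x)) ≤
      ENNReal.ofReal (Cs * φ t) * lMorreyNorm μ q φ g := by
  refine iSup₂_le fun b s => iSup_le fun hs => ?_
  have hts : 0 < t * s := mul_pos ht hs
  have hφs : (ENNReal.ofReal (φ s))⁻¹ ≤
      ENNReal.ofReal (Cs * φ t) * (ENNReal.ofReal (φ (t * s)))⁻¹ := by
    rw [← ENNReal.ofReal_inv_of_pos (hφ s hs), ← ENNReal.ofReal_inv_of_pos (hφ _ hts),
      ← ENNReal.ofReal_mul (mul_nonneg hCs (hφ t ht).le)]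
    refine ENNReal.ofReal_le_ofReal ?_
    rw [← div_eq_mul_inv, le_div_iff₀ (hφ _ hts), ← div_eq_inv_mul, div_le_iff₀ (hφ s hs)]
    exact hsub t s ht hs
  calc morreyTerm μ q φ (fun x => g (c + t • x)) b s
      = (ENNReal.ofReal (φ s))⁻¹ * (⨍⁻ y in ball (c + t • b) (t * s), g y ∂μ) ^ (1 / q) := by
        rw [morreyTerm, setLAverage_ball_comp_add_smul g c b ht s]
    _ ≤ ENNReal.ofReal (Cs * φ t) * (ENNReal.ofReal (φ (t * s)))⁻¹ *
          (⨍⁻ y in ball (c + t • b) (t * s), g y ∂μ) ^ (1 / q) := by gcongr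
    _ ≤ ENNReal.ofReal (Cs * φ t) * lMorreyNorm μ q φ g := by
        rw [mul_assoc]
        gcongr
        exact morreyTerm_le_lMorreyNorm g _ hts

theorem lMorreyNorm_comp_blowUp_le (hφ : ∀ r, 0 < r → 0 < φ r) {Cs : ℝ} (hCs : 0 ≤ Cs)
    (hsub : ∀ r s, 0 < r → 0 < s → φ (r * s) ≤ Cs * φ r * φ s) {C₄ : ℝ}
    (hinv : ∀ r, 0 < r → φ r⁻¹ ≤ C₄ / φ r) {ψ : E → E} {K : ℝ≥0∞}
    (hψ : ∀ h : E → ℝ≥0∞, (∀ z, h z ≠ ⊤) →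
      lMorreyNorm μ q φ (h ∘ ψ) ≤ K * lMorreyNorm μ q φ h)
    (x₀ : E) {c : ℝ} (hc : 0 < c) {h : E → ℝ≥0∞} (hh : ∀ z, h z ≠ ⊤) :
    lMorreyNorm μ q φ (h ∘ blowUp ψ x₀ c) ≤
      ENNReal.ofReal (Cs * Cs * C₄) * K * lMorreyNorm μ q φ h := by
  set F : E → ℝ≥0∞ := fun y => h (-(c • ψ x₀) + c • y)
  have hblow : h ∘ blowUp ψ x₀ c = fun x => (F ∘ ψ) (x₀ + c⁻¹ • x) := by
    ext x
    simp only [F, blowUp, Function.comp_apply, smul_sub, neg_add_eq_sub]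
  have hφc : Cs * φ c⁻¹ * (Cs * φ c) ≤ Cs * Cs * C₄ := by
    have := (le_div_iff₀ (hφ c hc)).1 (hinv c hc)
    calc Cs * φ c⁻¹ * (Cs * φ c) = Cs * Cs * (φ c⁻¹ * φ c) := by ring
      _ ≤ Cs * Cs * C₄ := by gcongr
  calc lMorreyNorm μ q φ (h ∘ blowUp ψ x₀ c)
      ≤ ENNReal.ofReal (Cs * φ c⁻¹) * lMorreyNorm μ q φ (F ∘ ψ) := by
        rw [hblow]
        exact lMorreyNorm_comp_add_smul_le hφ hCs hsub _ x₀ (inv_pos.2 hc)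
    _ ≤ ENNReal.ofReal (Cs * φ c⁻¹) * (K * (ENNReal.ofReal (Cs * φ c) * lMorreyNorm μ q φ h)) := by
        gcongr
        exact (hψ F fun y => hh _).trans
          (by gcongr; exact lMorreyNorm_comp_add_smul_le hφ hCs hsub h _ hc)
    _ = ENNReal.ofReal (Cs * φ c⁻¹ * (Cs * φ c)) * K * lMorreyNorm μ q φ h := by
        rw [ENNReal.ofReal_mul (mul_nonneg hCs (hφ _ (inv_pos.2 hc)).le)]
        ring
    _ ≤ ENNReal.ofReal (Cs * Cs * C₄) * K * lMorreyNorm μ q φ h := by gcongr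

theorem lMorreyNorm_comp_fderiv_le_of_lowerSemicontinuous (hq : 0 < q)
    (hφ : ∀ r, 0 < r → 0 < φ r) {Cs : ℝ} (hCs : 0 ≤ Cs)
    (hsub : ∀ r s, 0 < r → 0 < s → φ (r * s) ≤ Cs * φ r * φ s) {C₄ : ℝ}
    (hinv : ∀ r, 0 < r → φ r⁻¹ ≤ C₄ / φ r) {ψ : E → E} {K : ℝ≥0∞}
    (hψ : ∀ h : E → ℝ≥0∞, (∀ z, h z ≠ ⊤) →
      lMorreyNorm μ q φ (h ∘ ψ) ≤ K * lMorreyNorm μ q φ h)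
    (hψm : Measurable ψ) {x₀ : E} (hdiff : DifferentiableAt ℝ ψ x₀) {h : E → ℝ≥0∞}
    (hlsc : LowerSemicontinuous h) (hh : ∀ z, h z ≠ ⊤) :
    lMorreyNorm μ q φ (h ∘ fderiv ℝ ψ x₀) ≤
      ENNReal.ofReal (Cs * Cs * C₄) * K * lMorreyNorm μ q φ h := by
  refine lMorreyNorm_le_of_le_liminf hq hφ
    (g := fun k => h ∘ blowUp ψ x₀ (k + 1)) (fun k => hlsc.measurable.comp ?_) (fun x => ?_)
    fun k => lMorreyNorm_comp_blowUp_le hφ hCs hsub hinv hψ x₀ (by positivity) hh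
  · unfold blowUp
    fun_prop
  · refine (le_liminf_iff (by isBoundedDefault) (by isBoundedDefault)).2 fun y hy => ?_
    exact (tendsto_blowUp hdiff x).eventually (hlsc _ y hy)

theorem exists_inv_ofReal_le_mul_measure_ball_rpow {φ : ℝ → ℝ} (hφ : ∀ r, 0 < r → 0 < φ r)
    {p : ℝ} (hp : 0 < p) {c₀ : ℝ}
    (hlow : ∀ r : ℝ, 0 < r → r ^ (-(finrank ℝ E : ℝ) / p) ≤ c₀ * φ r) :
    ∃ c : ℝ≥0∞, c ≠ ⊤ ∧
      ∀ a r, 0 < r → (ENNReal.ofReal (φ r))⁻¹ ≤ c * μ (ball a r) ^ (1 / p) := by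
  set ω := μ (ball (0 : E) 1) ^ (1 / p)
  have hω₀ : ω ≠ 0 := (ENNReal.rpow_pos (measure_ball_pos μ 0 one_pos) measure_ball_lt_top.ne).ne'
  have hω : ω ≠ ⊤ := ENNReal.rpow_ne_top_of_nonneg (by positivity) measure_ball_lt_top.ne
  refine ⟨ENNReal.ofReal c₀ / ω, ENNReal.div_ne_top ENNReal.ofReal_ne_top hω₀, fun a r hr => ?_⟩
  have hrd : 0 < r ^ ((finrank ℝ E : ℝ) / p) := Real.rpow_pos_of_pos hr _
  calc (ENNReal.ofReal (φ r))⁻¹ ≤ ENNReal.ofReal (c₀ * r ^ ((finrank ℝ E : ℝ) / p)) := by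
        rw [← ENNReal.ofReal_inv_of_pos (hφ r hr)]
        refine ENNReal.ofReal_le_ofReal ?_
        have h := hlow r hr
        rw [neg_div, Real.rpow_neg hr.le, inv_le_iff_one_le_mul₀' hrd] at h
        rw [inv_le_iff_one_le_mul₀' (hφ r hr)]
        linarith
    _ = ENNReal.ofReal c₀ / ω * μ (ball a r) ^ (1 / p) := by
        rw [Measure.addHaar_ball_of_pos μ a hr, ENNReal.mul_rpow_of_nonneg _ _ (by positivity),
          ENNReal.ofReal_rpow_of_nonneg (by positivity) (by positivity), ← Real.rpow_natCast,
          ← Real.rpow_mul hr.le, ENNReal.ofReal_mul' hrd.le, mul_one_div, mul_comm _ ω,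
          ← mul_assoc, ENNReal.div_mul_cancel hω₀ hω]

end Haar

theorem lMorreyNorm_comp_le_of_gMorreyNorm_comp_le {n : ℕ} {q : ℝ} (hq : 0 < q) {φ : ℝ → ℝ}
    {ψ : EuclideanSpace ℝ (Fin n) → EuclideanSpace ℝ (Fin n)} {K : ℝ}
    (hψ : ∀ f : EuclideanSpace ℝ (Fin n) → ℝ,
      gMorreyNorm q φ (f ∘ ψ) ≤ ENNReal.ofReal K * gMorreyNorm q φ f)
    {h : EuclideanSpace ℝ (Fin n) → ℝ≥0∞} (hh : ∀ z, h z ≠ ⊤) :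
    lMorreyNorm volume q φ (h ∘ ψ) ≤ ENNReal.ofReal K * lMorreyNorm volume q φ h := by
  have hF : ∀ z, ENNReal.ofReal (|(h z).toReal ^ (1 / q)| ^ q) = h z := fun z => by
    rw [abs_of_nonneg (by positivity), ← Real.rpow_mul ENNReal.toReal_nonneg,
      one_div_mul_cancel hq.ne', Real.rpow_one, ENNReal.ofReal_toReal (hh z)]
  have := hψ fun z => (h z).toReal ^ (1 / q)
  simp only [gMorreyNorm_eq_lMorreyNorm, Function.comp_apply, hF] at this
  exact this

end Morrey

open Morrey in
/-- Let `φ ∈ G₂^dec`, `1 ≤ q ≤ p < ∞` with `r^(−n/p) ≲ φ(r)`.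
If a diffeomorphism `ψ` induces a bounded `C_ψ` on the generalized Morrey space
`M_q^φ(ℝⁿ)`, then there is `C > 0` independent of `x₀` and `f` with
`‖f(Dψ(x₀)·)‖_{M_q^φ} ≤ C ‖f‖_{M_q^φ}`. -/
theorem statement10 {n : ℕ} (φ : ℝ → ℝ) (hφ : G2dec φ)
    (q p : ℝ) (hq : 1 ≤ q) (hqp : q ≤ p)
    (hφp : ∃ c > 0, ∀ r : ℝ, 0 < r → r ^ (-(n : ℝ) / p) ≤ c * φ r)
    (ψ ψinv : EuclideanSpace ℝ (Fin n) → EuclideanSpace ℝ (Fin n))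
    (hinv₁ : Function.LeftInverse ψinv ψ) (hinv₂ : Function.RightInverse ψinv ψ)
    (hdiff : Differentiable ℝ ψ) (hdiff' : Differentiable ℝ ψinv)
    (hbdd : ∃ K > 0, ∀ f : EuclideanSpace ℝ (Fin n) → ℝ,
      gMorreyNorm q φ (f ∘ ψ) ≤ ENNReal.ofReal K * gMorreyNorm q φ f) :
    ∃ C > 0, ∀ x₀ : EuclideanSpace ℝ (Fin n), ∀ f : EuclideanSpace ℝ (Fin n) → ℝ,
      gMorreyNorm q φ (fun x => f (fderiv ℝ ψ x₀ x)) ≤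
        ENNReal.ofReal C * gMorreyNorm q φ f := by
  obtain ⟨⟨hφ, -, Cs, hCs, hsub⟩, -, -, C₄, hC₄, hinv⟩ := hφ
  obtain ⟨c₀, -, hlow⟩ := hφp
  obtain ⟨K, hK, hψ⟩ := hbdd
  have hq₀ : 0 < q := by linarith
  obtain ⟨c, hc, hball⟩ := exists_inv_ofReal_le_mul_measure_ball_rpow
    (μ := (volume : Measure (EuclideanSpace ℝ (Fin n)))) hφ (hq₀.trans_le hqp)
    (by simpa only [finrank_euclideanSpace_fin] using hlow)
  refine ⟨Cs * Cs * C₄ * K, by positivity, fun x₀ f => ?_⟩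
  rw [ENNReal.ofReal_mul (by positivity), gMorreyNorm_eq_lMorreyNorm, gMorreyNorm_eq_lMorreyNorm]
  exact lMorreyNorm_comp_le_of_forall_lowerSemicontinuous hq hqp hφ hc hball
    (measurableEmbedding_fderiv_of_inverse hinv₁ hinv₂ (hdiff x₀) (hdiff' (ψ x₀)))
    (by finiteness)
    (fun h hh hfin => lMorreyNorm_comp_fderiv_le_of_lowerSemicontinuous hq₀ hφ hCs.le hsub hinv
      (fun _ => lMorreyNorm_comp_le_of_gMorreyNorm_comp_le hq₀ hψ) hdiff.continuous.measurable
      (hdiff x₀) hh hfin)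
    (fun x => ENNReal.ofReal (|f x| ^ q))
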